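/- arXiv:2410.10052 — 4 statements merged into one kernel-verified Lean document; each statement's English description precedes it below -/
import Mathlib

section
/- Let a : ℝ → ℝ be twice differentiable with a''(ξ) > 0 for every ξ ∈ ℝ. Then for all ξ₁, ξ₂, ξ₃, ξ₄ ∈ ℝ one has ξ₁ - ξ₂ + ξ₃ - ξ₄ = 0 and a(ξ₁) - a(ξ₂) + a(ξ₃) - a(ξ₄) = 0 simultaneously if and only if (ξ₁ = ξ₂ and ξ₃ = ξ₄) or (ξ₁ = ξ₄ and ξ₃ = ξ₂). In other words, the resonant set ℛ = {ξ ∈ ℝ⁴ : Δ⁴ξ = 0 and Δ⁴a(ξ) = 0} coincides with the set where the unordered pair {ξ₁, ξ₃} equals the unordered pair {ξ₂, ξ₄}. -/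
/-!
A strictly convex function separates pairs with the same sum: if `x < u ≤ v < y` and
`u + v = x + y`, then `u` and `v` are the two mirror-image convex combinations
`t x + (1 - t) y` and `(1 - t) x + t y`, so adding the two strict convexity inequalities gives
`f u + f v < f x + f y`. Hence equal sums and equal sums of values force `{x, y} = {u, v}`; a positive
second derivative makes `a` strictly convex.
-/

variable {𝕜 : Type*} [Field 𝕜] [LinearOrder 𝕜] [IsStrictOrderedRing 𝕜]
  {s : Set 𝕜} {f : 𝕜 → 𝕜}

theorem StrictConvexOn.map_add_lt_map_add_of_lt_of_lt (hf : StrictConvexOn 𝕜 s f)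
    {x y u v : 𝕜} (hx : x ∈ s) (hy : y ∈ s) (hxu : x < u) (huv : u ≤ v) (hvy : v < y)
    (hsum : u + v = x + y) :
    f u + f v < f x + f y := by
  have hxy : x < y := by linarith
  set t := (y - u) / (y - x)
  have ht : t * (y - x) = y - u := div_mul_cancel₀ _ (sub_ne_zero.2 hxy.ne')
  have ht0 : 0 < t := div_pos (by linarith) (sub_pos.2 hxy)
  have ht1 : 0 < 1 - t := by
    rw [sub_pos, div_lt_one (sub_pos.2 hxy)]
    linarith
  have hu := hf.2 hx hy hxy.ne ht0 ht1 (by ring)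
  have hv := hf.2 hx hy hxy.ne ht1 ht0 (by ring)
  simp only [smul_eq_mul] at hu hv
  rw [show t * x + (1 - t) * y = u by linear_combination -ht] at hu
  rw [show (1 - t) * x + t * y = v by linear_combination ht - hsum] at hv
  linarith

theorem StrictConvexOn.sym2_eq_of_add_eq_of_map_add_eq (hf : StrictConvexOn 𝕜 s f)
    {x y u v : 𝕜} (hx : x ∈ s) (hy : y ∈ s) (hu : u ∈ s) (hv : v ∈ s)
    (hsum : x + y = u + v) (hfsum : f x + f y = f u + f v) : s(x, y) = s(u, v) := by
  wlog hxy : x ≤ y generalizing x y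
  · rw [Sym2.eq_swap]
    exact this hy hx (by linarith) (by linarith) (by linarith)
  wlog huv : u ≤ v generalizing u v
  · rw [Sym2.eq_swap (a := u)]
    exact this hv hu (by linarith) (by linarith) (by linarith)
  wlog hxu : x ≤ u generalizing x y u v
  · exact (this hu hv huv hx hy hsum.symm hfsum.symm hxy (by linarith)).symm
  obtain rfl | hxu := hxu.eq_or_lt
  · rw [add_left_cancel hsum]
  · have := hf.map_add_lt_map_add_of_lt_of_lt hx hy hxu huv (by linarith) hsum.symm
    linarith

theorem stmt_0_general (a : ℝ → ℝ)
    (ha : Differentiable ℝ a)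
    (hconv : ∀ ξ : ℝ, 0 < deriv (deriv a) ξ) :
    ∀ ξ₁ ξ₂ ξ₃ ξ₄ : ℝ,
      (ξ₁ - ξ₂ + ξ₃ - ξ₄ = 0 ∧ a ξ₁ - a ξ₂ + a ξ₃ - a ξ₄ = 0) ↔
        ((ξ₁ = ξ₂ ∧ ξ₃ = ξ₄) ∨ (ξ₁ = ξ₄ ∧ ξ₃ = ξ₂)) := by
  have hstrict : StrictConvexOn ℝ Set.univ a :=
    strictConvexOn_of_deriv2_pos' convex_univ ha.continuous.continuousOn fun ξ _ => hconv ξ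
  intro ξ₁ ξ₂ ξ₃ ξ₄
  constructor
  · rintro ⟨hsum, hval⟩
    rw [← Sym2.eq_iff]
    exact hstrict.sym2_eq_of_add_eq_of_map_add_eq trivial trivial trivial trivial
      (by linarith) (by linarith)
  · rintro (⟨rfl, rfl⟩ | ⟨rfl, rfl⟩) <;> constructor <;> ring

/-- The resonant set for a strictly convex dispersion relation `a`:
`ξ₁ - ξ₂ + ξ₃ - ξ₄ = 0` and `a ξ₁ - a ξ₂ + a ξ₃ - a ξ₄ = 0` hold simultaneously
iff the unordered pair `{ξ₁, ξ₃}` coincides with `{ξ₂, ξ₄}`. -/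
theorem stmt_0 (a : ℝ → ℝ)
    (ha : Differentiable ℝ a) (ha' : Differentiable ℝ (deriv a))
    (hconv : ∀ ξ : ℝ, 0 < deriv (deriv a) ξ) :
    ∀ ξ₁ ξ₂ ξ₃ ξ₄ : ℝ,
      (ξ₁ - ξ₂ + ξ₃ - ξ₄ = 0 ∧ a ξ₁ - a ξ₂ + a ξ₃ - a ξ₄ = 0) ↔
        ((ξ₁ = ξ₂ ∧ ξ₃ = ξ₄) ∨ (ξ₁ = ξ₄ ∧ ξ₃ = ξ₂)) :=
  stmt_0_general a ha hconv
end

section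
/- Let γ ∈ ℝ, λ ≥ 1, c₀ > 0, and let a : ℝ → ℝ be twice continuously differentiable with a''(ζ) ≥ c₀ λ^γ for all ζ ∈ [λ/2, 2λ]. Let φ : ℝ → ℂ be continuously differentiable, supported in [λ/2, 2λ], with |φ(ζ)| ≤ 1 for all ζ and ∫_ℝ |φ'(ζ)| dζ ≤ M. Then there is a universal constant C such that for all t ≠ 0 and all x ∈ ℝ: |∫_ℝ e^{i(xξ - t a(ξ))} φ(ξ) dξ| ≤ C (1+M)(c₀ |t| λ^γ)^{-1/2}. Consequently, for every f ∈ L¹(ℝ), the frequency-localized free evolution u(t,x) := (2π)^{-1}∫ e^{i(xξ - t a(ξ))} φ(ξ) f̂(ξ) dξ satisfies ‖u(t,·)‖_{L^∞(ℝ)} ≤ C(1+M) c₀^{-1/2} λ^{-γ/2} |t|^{-1/2} ‖f‖_{L¹(ℝ)} for all t ≠ 0. -/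
/-!
With the phase `ψ(ξ) = xξ - t a(ξ)` the kernel is `∫ e^{iψ} φ`, and `|ψ''| ≥ |t| c₀ λ^γ =: A` on
the support of `φ`. Van der Corput's lemma bounds every partial integral `∫_p^ξ e^{iψ}` by
`10 / √A`: where `|ψ'| ≥ δ := √A` one integrates by parts against `1 / ψ'`, which is monotone, and
since `ψ'` grows at rate `A` the set where `|ψ'| < δ` is an interval of length at most `2δ / A`.
Integrating by parts once more against `φ` gives the kernel bound with the factor
`|φ(λ/2)| + |φ(2λ)| + ∫ |φ'| ≤ 2 (1 + M)`. By Fubini, `u(t, ·)` is `(2π)⁻¹` times the convolution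
of `f` with this kernel, whence the `L¹ → L^∞` bound.
-/

open MeasureTheory Set

/-- Fourier transform with the convention `f̂(ξ) = ∫ e^{-ixξ} f(x) dx`. -/
noncomputable def FT (f : ℝ → ℂ) (ξ : ℝ) : ℂ :=
  ∫ x : ℝ, Complex.exp (-(Complex.I * (x : ℂ) * (ξ : ℂ))) * f x

theorem norm_intervalIntegral_mul_deriv_le {u u' v v' : ℝ → ℂ} {a b B : ℝ} (hab : a ≤ b)
    (hu : ∀ x ∈ Icc a b, HasDerivAt u (u' x) x) (hv : ∀ x ∈ Icc a b, HasDerivAt v (v' x) x)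
    (hu' : IntervalIntegrable u' volume a b) (hv' : IntervalIntegrable v' volume a b)
    (hvB : ∀ x ∈ Icc a b, ‖v x‖ ≤ B) :
    ‖∫ x in a..b, u x * v' x‖ ≤ B * (‖u a‖ + ‖u b‖ + ∫ x in a..b, ‖u' x‖) := by
  rw [← uIcc_of_le hab] at hu hv
  rw [intervalIntegral.integral_mul_deriv_eq_deriv_mul hu hv hu' hv']
  have hrest : ‖∫ x in a..b, u' x * v x‖ ≤ (∫ x in a..b, ‖u' x‖) * B := by
    rw [← intervalIntegral.integral_mul_const]
    refine intervalIntegral.norm_integral_le_of_norm_le hab (ae_of_all _ fun x hx => ?_)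
      (hu'.norm.mul_const B)
    rw [norm_mul]
    exact mul_le_mul_of_nonneg_left (hvB x (Ioc_subset_Icc_self hx)) (norm_nonneg _)
  calc ‖u b * v b - u a * v a - ∫ x in a..b, u' x * v x‖
      ≤ ‖u b‖ * ‖v b‖ + ‖u a‖ * ‖v a‖ + ‖∫ x in a..b, u' x * v x‖ := by
        grw [norm_sub_le, norm_sub_le, norm_mul, norm_mul]
    _ ≤ ‖u b‖ * B + ‖u a‖ * B + (∫ x in a..b, ‖u' x‖) * B := by
        gcongr
        exacts [hvB b (right_mem_Icc.2 hab), hvB a (left_mem_Icc.2 hab)]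
    _ = B * (‖u a‖ + ‖u b‖ + ∫ x in a..b, ‖u' x‖) := by ring

theorem integral_abs_deriv_eq_sub_of_deriv_nonpos {g g' : ℝ → ℝ} {a b : ℝ} (hab : a ≤ b)
    (hg : ∀ x ∈ Icc a b, HasDerivAt g (g' x) x) (hg' : IntervalIntegrable g' volume a b)
    (hg'_nonpos : ∀ x ∈ Icc a b, g' x ≤ 0) :
    ∫ x in a..b, |g' x| = g a - g b := by
  rw [← uIcc_of_le hab] at hg hg'_nonpos
  rw [intervalIntegral.integral_congr fun x hx => abs_of_nonpos (hg'_nonpos x hx),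
    intervalIntegral.integral_neg, intervalIntegral.integral_eq_sub_of_hasDerivAt hg hg']
  ring

theorem ContinuousOn.forall_le_or_forall_le_neg_of_le_abs {f : ℝ → ℝ} {a b A : ℝ}
    (hf : ContinuousOn f (Icc a b)) (hA : 0 < A) (h : ∀ x ∈ Icc a b, A ≤ |f x|) :
    (∀ x ∈ Icc a b, A ≤ f x) ∨ (∀ x ∈ Icc a b, f x ≤ -A) := by
  by_contra! hsign
  obtain ⟨⟨x, hx, hxA⟩, ⟨y, hy, hyA⟩⟩ := hsign
  have hx' : f x ≤ -A := by rcases le_abs'.1 (h x hx) with h | h <;> linarith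
  have hy' : A ≤ f y := by rcases le_abs'.1 (h y hy) with h | h <;> linarith
  obtain ⟨z, hz, hz0⟩ := intermediate_value_uIcc (hf.mono (uIcc_subset_Icc hx hy))
    (show (0 : ℝ) ∈ uIcc (f x) (f y) from mem_uIcc_of_le (by linarith) (by linarith))
  have := h z (uIcc_subset_Icc hx hy hz)
  rw [hz0, abs_zero] at this
  linarith

theorem integral_eq_intervalIntegral_of_support_subset_Icc {E : Type*} [NormedAddCommGroup E]
    [NormedSpace ℝ E] {f : ℝ → E} {a b : ℝ} (hab : a ≤ b) (h : Function.support f ⊆ Icc a b) :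
    ∫ x, f x = ∫ x in a..b, f x := by
  rw [intervalIntegral.integral_of_le hab, ← integral_Icc_eq_integral_Ioc,
    setIntegral_eq_integral_of_forall_compl_eq_zero fun _ hx =>
      Function.notMem_support.1 (hx <| h ·)]

section VanDerCorput

variable {ψ : ℝ → ℝ} {a b δ : ℝ}

theorem ContDiff.contDiff_deriv_of_two (hψ : ContDiff ℝ 2 ψ) : ContDiff ℝ 1 (deriv ψ) :=
  hψ.iterate_deriv' 1 1

theorem ContDiff.hasDerivAt_deriv_of_two (hψ : ContDiff ℝ 2 ψ) (x : ℝ) :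
    HasDerivAt (deriv ψ) (deriv (deriv ψ) x) x :=
  (hψ.contDiff_deriv_of_two.differentiable one_ne_zero x).hasDerivAt

theorem ContDiff.mul_sub_le_deriv_sub_of_two {C : ℝ} (hψ : ContDiff ℝ 2 ψ)
    (h : ∀ x ∈ Icc a b, C ≤ deriv (deriv ψ) x) ⦃x : ℝ⦄ (hx : x ∈ Icc a b) ⦃y : ℝ⦄
    (hy : y ∈ Icc a b) (hxy : x ≤ y) : C * (y - x) ≤ deriv ψ y - deriv ψ x :=
  (convex_Icc a b).mul_sub_le_image_sub_of_le_deriv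
    (hψ.continuous_deriv one_le_two).continuousOn
    (hψ.contDiff_deriv_of_two.differentiable one_ne_zero).differentiableOn
    (fun z hz => h z (interior_subset hz)) x hx y hy hxy

theorem norm_intervalIntegral_exp_le_of_le_abs_deriv (hψ : ContDiff ℝ 2 ψ) (hab : a ≤ b)
    (hδ : 0 < δ) (hψ' : ∀ x ∈ Icc a b, δ ≤ |deriv ψ x|)
    (hψ'' : ∀ x ∈ Icc a b, 0 ≤ deriv (deriv ψ) x) :
    ‖∫ x in a..b, Complex.exp (Complex.I * ψ x)‖ ≤ 4 / δ := by
  have hne : ∀ x ∈ Icc a b, deriv ψ x ≠ 0 := fun x hx => abs_pos.1 (hδ.trans_le (hψ' x hx))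
  have hinv : ∀ x ∈ Icc a b, |(deriv ψ x)⁻¹| ≤ δ⁻¹ := fun x hx => by
    rw [abs_inv]; exact inv_anti₀ hδ (hψ' x hx)
  set w : ℝ → ℝ := fun x => -deriv (deriv ψ) x / deriv ψ x ^ 2
  have hw : ∀ x ∈ Icc a b, HasDerivAt (fun x => (deriv ψ x)⁻¹) (w x) x := fun x hx =>
    (hψ.hasDerivAt_deriv_of_two x).inv (hne x hx)
  have hw_cont : ContinuousOn w (uIcc a b) := by
    rw [uIcc_of_le hab]
    exact ((hψ.contDiff_deriv_of_two.continuous_deriv le_rfl).neg.continuousOn).div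
      ((hψ.continuous_deriv one_le_two).pow _).continuousOn fun x hx => pow_ne_zero _ (hne x hx)
  have hvar : ∫ x in a..b, |w x| ≤ 2 * δ⁻¹ := by
    rw [integral_abs_deriv_eq_sub_of_deriv_nonpos hab hw hw_cont.intervalIntegrable fun x hx =>
      div_nonpos_of_nonpos_of_nonneg (neg_nonpos.2 (hψ'' x hx)) (sq_nonneg _)]
    linarith [hinv a (left_mem_Icc.2 hab), hinv b (right_mem_Icc.2 hab),
      neg_abs_le (deriv ψ b)⁻¹, le_abs_self (deriv ψ a)⁻¹]
  have hψ'_cont := hψ.continuous_deriv one_le_two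
  -- `e^{iψ} = (1 / ψ') · (-i e^{iψ})'`
  have hibp := norm_intervalIntegral_mul_deriv_le (u := fun x => (((deriv ψ x)⁻¹ : ℝ) : ℂ))
    (v := fun x => -Complex.I * Complex.exp (Complex.I * ψ x)) (B := 1) hab
    (fun x hx => (hw x hx).ofReal_comp)
    (fun x _ => (((hψ.differentiable two_ne_zero x).hasDerivAt.ofReal_comp.const_mul
      Complex.I).cexp).const_mul _)
    (Complex.continuous_ofReal.comp_continuousOn hw_cont).intervalIntegrable
    ((by fun_prop : Continuous fun x => -Complex.I * (Complex.exp (Complex.I * ψ x) *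
      (Complex.I * deriv ψ x))).intervalIntegrable _ _)
    (fun x _ => by simp)
  rw [intervalIntegral.integral_congr fun x hx => ?_]
  · refine hibp.trans ?_
    simp only [Complex.norm_real, Real.norm_eq_abs]
    grw [hinv a (left_mem_Icc.2 hab), hinv b (right_mem_Icc.2 hab), hvar]
    rw [div_eq_mul_inv]
    linarith
  · have := Complex.ofReal_ne_zero.2 (hne x (uIcc_of_le hab ▸ hx))
    rw [Complex.ofReal_inv]
    field_simp
    ring_nf
    rw [Complex.I_sq]
    ring

theorem exists_deriv_mem_Icc_and_norm_intervalIntegral_exp_le (hψ : ContDiff ℝ 2 ψ)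
    (hab : a ≤ b) (hδ : 0 < δ) (hψ'' : ∀ x ∈ Icc a b, 0 ≤ deriv (deriv ψ) x)
    (ha : deriv ψ a ≤ δ) (hb : -δ ≤ deriv ψ b) :
    ∃ u ∈ Icc a b, deriv ψ u ∈ Icc (-δ) δ ∧
      ‖∫ x in a..u, Complex.exp (Complex.I * ψ x)‖ ≤ 4 / δ := by
  by_cases ha' : -δ ≤ deriv ψ a
  · exact ⟨a, left_mem_Icc.2 hab, ⟨ha', ha⟩, by simp; positivity⟩
  obtain ⟨u, hu, hψu⟩ := intermediate_value_Icc hab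
    (hψ.continuous_deriv one_le_two).continuousOn ⟨(not_le.1 ha').le, hb⟩
  refine ⟨u, hu, ⟨hψu.ge, hψu.le.trans (by linarith)⟩,
    norm_intervalIntegral_exp_le_of_le_abs_deriv hψ hu.1 hδ (fun x hx => ?_)
      (fun x hx => hψ'' x ⟨hx.1, hx.2.trans hu.2⟩)⟩
  have := hψ.mul_sub_le_deriv_sub_of_two hψ'' ⟨hx.1, hx.2.trans hu.2⟩ hu hx.2
  rw [abs_of_neg] <;> linarith

theorem exists_deriv_le_and_norm_intervalIntegral_exp_le (hψ : ContDiff ℝ 2 ψ)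
    (hab : a ≤ b) (hδ : 0 < δ) (hψ'' : ∀ x ∈ Icc a b, 0 ≤ deriv (deriv ψ) x)
    (ha : deriv ψ a ≤ δ) :
    ∃ v ∈ Icc a b, deriv ψ v ≤ δ ∧
      ‖∫ x in v..b, Complex.exp (Complex.I * ψ x)‖ ≤ 4 / δ := by
  by_cases hb : deriv ψ b ≤ δ
  · exact ⟨b, right_mem_Icc.2 hab, hb, by simp; positivity⟩
  obtain ⟨v, hv, hψv⟩ := intermediate_value_Icc hab
    (hψ.continuous_deriv one_le_two).continuousOn ⟨ha, (not_le.1 hb).le⟩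
  refine ⟨v, hv, hψv.le,
    norm_intervalIntegral_exp_le_of_le_abs_deriv hψ hv.2 hδ (fun x hx => ?_)
      (fun x hx => hψ'' x ⟨hv.1.trans hx.1, hx.2⟩)⟩
  have := hψ.mul_sub_le_deriv_sub_of_two hψ'' hv ⟨hv.1.trans hx.1, hx.2⟩ hx.1
  rw [abs_of_pos] <;> linarith

theorem norm_intervalIntegral_exp_le_of_le_deriv_deriv {A : ℝ} (hψ : ContDiff ℝ 2 ψ)
    (hab : a ≤ b) (hA : 0 < A) (hψ'' : ∀ x ∈ Icc a b, A ≤ deriv (deriv ψ) x) :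
    ‖∫ x in a..b, Complex.exp (Complex.I * ψ x)‖ ≤ 10 / √A := by
  set δ := √A
  have hδ : 0 < δ := Real.sqrt_pos.2 hA
  have hconv : ∀ x ∈ Icc a b, 0 ≤ deriv (deriv ψ) x := fun x hx => hA.le.trans (hψ'' x hx)
  have h4 : 4 / δ ≤ 10 / δ := by gcongr; norm_num
  by_cases hb : deriv ψ b < -δ
  · refine (norm_intervalIntegral_exp_le_of_le_abs_deriv hψ hab hδ (fun x hx => ?_)
      hconv).trans h4
    have := hψ.mul_sub_le_deriv_sub_of_two hconv hx (right_mem_Icc.2 hab) hx.2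
    rw [abs_of_neg] <;> linarith
  by_cases ha : δ < deriv ψ a
  · refine (norm_intervalIntegral_exp_le_of_le_abs_deriv hψ hab hδ (fun x hx => ?_)
      hconv).trans h4
    have := hψ.mul_sub_le_deriv_sub_of_two hconv (left_mem_Icc.2 hab) hx hx.1
    rw [abs_of_pos] <;> linarith
  push Not at ha hb
  obtain ⟨u, hu, hψu, hleft⟩ :=
    exists_deriv_mem_Icc_and_norm_intervalIntegral_exp_le hψ hab hδ hconv ha hb
  obtain ⟨v, hv, hψv, hright⟩ := exists_deriv_le_and_norm_intervalIntegral_exp_le hψ hu.2 hδ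
    (fun x hx => hconv x ⟨hu.1.trans hx.1, hx.2⟩) hψu.2
  have hmid : ‖∫ x in u..v, Complex.exp (Complex.I * ψ x)‖ ≤ 2 / δ := by
    have hgrowth := hψ.mul_sub_le_deriv_sub_of_two hψ'' hu ⟨hu.1.trans hv.1, hv.2⟩ hv.1
    have hδA : δ * δ = A := Real.mul_self_sqrt hA.le
    calc ‖∫ x in u..v, Complex.exp (Complex.I * ψ x)‖ ≤ 1 * |v - u| :=
          intervalIntegral.norm_integral_le_of_norm_le_const fun x _ =>
            (Complex.norm_exp_I_mul_ofReal _).le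
      _ ≤ 2 / δ := by
          rw [one_mul, abs_of_nonneg (sub_nonneg.2 hv.1), le_div_iff₀ hδ]
          nlinarith [hψu.1]
  have hint : ∀ c d, IntervalIntegrable (fun x => Complex.exp (Complex.I * ψ x)) volume c d :=
    (by fun_prop : Continuous fun x => Complex.exp (Complex.I * ψ x)).intervalIntegrable
  rw [← intervalIntegral.integral_add_adjacent_intervals (hint a u) (hint u b),
    ← intervalIntegral.integral_add_adjacent_intervals (hint u v) (hint v b)]
  calc _ ≤ 4 / δ + (2 / δ + 4 / δ) := by grw [norm_add_le, norm_add_le, hleft, hmid, hright]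
    _ = 10 / δ := by ring

theorem norm_intervalIntegral_exp_le_of_le_abs_deriv_deriv {A : ℝ} (hψ : ContDiff ℝ 2 ψ)
    (hab : a ≤ b) (hA : 0 < A) (hψ'' : ∀ x ∈ Icc a b, A ≤ |deriv (deriv ψ) x|) :
    ‖∫ x in a..b, Complex.exp (Complex.I * ψ x)‖ ≤ 10 / √A := by
  rcases ((hψ.contDiff_deriv_of_two.continuous_deriv le_rfl).continuousOn
    |>.forall_le_or_forall_le_neg_of_le_abs hA hψ'') with hconvex | hconcave
  · exact norm_intervalIntegral_exp_le_of_le_deriv_deriv hψ hab hA hconvex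
  -- `e^{-iψ}` is the conjugate of `e^{iψ}`, and `-ψ` is convex
  have := norm_intervalIntegral_exp_le_of_le_deriv_deriv hψ.neg hab hA fun x hx => by
    simp only [deriv.fun_neg']
    linarith [hconcave x hx]
  calc ‖∫ x in a..b, Complex.exp (Complex.I * ψ x)‖
      = ‖∫ x in a..b, Complex.exp (Complex.I * ↑(-ψ x))‖ := by
        rw [← Complex.norm_conj, ← intervalIntegral.intervalIntegral_conj]
        congr 2 with x
        rw [← Complex.exp_conj]
        simp
    _ ≤ 10 / √A := this

end VanDerCorput

theorem norm_intervalIntegral_mul_le_of_norm_primitive_le {g φ : ℝ → ℂ} {a b B : ℝ}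
    (hab : a ≤ b) (hg : Continuous g) (hφ : ContDiff ℝ 1 φ)
    (hB : ∀ x ∈ Icc a b, ‖∫ s in a..x, g s‖ ≤ B) :
    ‖∫ x in a..b, φ x * g x‖ ≤ B * (‖φ a‖ + ‖φ b‖ + ∫ x in a..b, ‖deriv φ x‖) :=
  norm_intervalIntegral_mul_deriv_le hab (fun x _ => (hφ.differentiable one_ne_zero x).hasDerivAt)
    (fun _ _ => intervalIntegral.integral_hasDerivAt_right (hg.intervalIntegrable _ _)
      (hg.stronglyMeasurableAtFilter _ _) hg.continuousAt)
    ((hφ.continuous_deriv le_rfl).intervalIntegrable _ _) (hg.intervalIntegrable _ _) hB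

theorem norm_integral_exp_mul_le_of_le_abs_deriv_deriv {ψ : ℝ → ℝ} {φ : ℝ → ℂ} {a b A : ℝ}
    (hψ : ContDiff ℝ 2 ψ) (hab : a ≤ b) (hA : 0 < A)
    (hψ'' : ∀ x ∈ Icc a b, A ≤ |deriv (deriv ψ) x|) (hφ : ContDiff ℝ 1 φ)
    (hsupp : Function.support φ ⊆ Icc a b) :
    ‖∫ x, Complex.exp (Complex.I * ψ x) * φ x‖ ≤
      10 / √A * (‖φ a‖ + ‖φ b‖ + ∫ x, ‖deriv φ x‖) := by
  have hderiv_supp : Function.support (fun x => ‖deriv φ x‖) ⊆ Icc a b := fun x hx =>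
    closure_minimal hsupp isClosed_Icc (support_deriv_subset (norm_ne_zero_iff.1 hx))
  rw [integral_eq_intervalIntegral_of_support_subset_Icc hab
      ((Function.support_mul_subset_right _ _).trans hsupp),
    integral_eq_intervalIntegral_of_support_subset_Icc hab hderiv_supp]
  simp_rw [mul_comm (Complex.exp _)]
  exact norm_intervalIntegral_mul_le_of_norm_primitive_le hab (by fun_prop) hφ fun x hx =>
    norm_intervalIntegral_exp_le_of_le_abs_deriv_deriv hψ hx.1 hA fun y hy =>
      hψ'' y ⟨hy.1, hy.2.trans hx.2⟩

theorem deriv_deriv_mul_sub_mul {a : ℝ → ℝ} (ha : ContDiff ℝ 2 a) (x t ξ : ℝ) :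
    deriv (deriv fun ξ => x * ξ - t * a ξ) ξ = -(t * deriv (deriv a) ξ) := by
  have : deriv (fun ξ => x * ξ - t * a ξ) = fun ξ => x - t * deriv a ξ := funext fun ξ => by
    simpa using (((hasDerivAt_id ξ).const_mul x).fun_sub
      ((ha.differentiable two_ne_zero ξ).hasDerivAt.const_mul t)).deriv
  simp [this, ha.contDiff_deriv_of_two.differentiable one_ne_zero ξ]

theorem norm_integral_exp_phase_mul_le {a : ℝ → ℝ} {φ : ℝ → ℂ} {p q A M t : ℝ}
    (ha : ContDiff ℝ 2 a) (hpq : p ≤ q) (hA : 0 < A)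
    (ha'' : ∀ ξ ∈ Icc p q, A ≤ |deriv (deriv a) ξ|) (hφ : ContDiff ℝ 1 φ)
    (hsupp : Function.support φ ⊆ Icc p q) (hφ1 : ∀ ξ, ‖φ ξ‖ ≤ 1)
    (hM : ∫ ξ, ‖deriv φ ξ‖ ≤ M) (ht : t ≠ 0) (x : ℝ) :
    ‖∫ ξ : ℝ, Complex.exp (Complex.I * ((x : ℂ) * (ξ : ℂ) - (t : ℂ) * (a ξ : ℂ))) * φ ξ‖ ≤
      20 * (1 + M) * (|t| * A) ^ (-(1/2) : ℝ) := by
  have hψ'' : ∀ ξ ∈ Icc p q, |t| * A ≤ |deriv (deriv fun ξ => x * ξ - t * a ξ) ξ| :=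
    fun ξ hξ => by
      rw [deriv_deriv_mul_sub_mul ha, abs_neg, abs_mul]
      exact mul_le_mul_of_nonneg_left (ha'' ξ hξ) (abs_nonneg t)
  have htA : 0 < |t| * A := by positivity
  have hvdc := norm_integral_exp_mul_le_of_le_abs_deriv_deriv (by fun_prop) hpq htA hψ'' hφ hsupp
  push_cast at hvdc
  calc _ ≤ 10 / √(|t| * A) * (‖φ p‖ + ‖φ q‖ + ∫ ξ, ‖deriv φ ξ‖) := hvdc
    _ ≤ 10 / √(|t| * A) * (2 * (1 + M)) := by
        gcongr
        linarith [hφ1 p, hφ1 q, (integral_nonneg fun _ => norm_nonneg _ : 0 ≤ ∫ ξ, ‖deriv φ ξ‖)]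
    _ = 20 * (1 + M) * (|t| * A) ^ (-(1/2) : ℝ) := by
        rw [Real.sqrt_eq_rpow, div_eq_mul_inv, ← Real.rpow_neg htA.le]
        ring_nf

theorem integral_mul_FT_eq {g f : ℝ → ℂ} (hg : Integrable g) (hf : Integrable f) :
    ∫ ξ, g ξ * FT f ξ = ∫ y, FT g y * f y := by
  set F : ℝ → ℝ → ℂ := fun ξ y => g ξ * (Complex.exp (-(Complex.I * y * ξ)) * f y)
  have hF : Integrable (Function.uncurry F) (volume.prod volume) := by
    refine ((hg.mul_prod hf).bdd_mul (c := 1) (f := fun z : ℝ × ℝ =>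
      Complex.exp (-(Complex.I * z.2 * z.1))) (by fun_prop) (ae_of_all _ fun z => by
        simp [Complex.norm_exp])).congr (ae_of_all _ fun z => ?_)
    simp only [F, Function.uncurry]
    ring
  calc ∫ ξ, g ξ * FT f ξ = ∫ ξ, ∫ y, F ξ y := by simp_rw [F, FT, ← integral_const_mul]
    _ = ∫ y, ∫ ξ, F ξ y := integral_integral_swap hF
    _ = ∫ y, FT g y * f y := by
        simp_rw [FT, ← integral_mul_const]
        congr 1 with y
        congr 1 with ξ
        simp only [F]
        ring_nf

theorem norm_integral_mul_FT_le {g f : ℝ → ℂ} {B : ℝ} (hg : Integrable g) (hf : Integrable f)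
    (hB : ∀ y, ‖FT g y‖ ≤ B) : ‖∫ ξ, g ξ * FT f ξ‖ ≤ B * ∫ y, ‖f y‖ := by
  rw [integral_mul_FT_eq hg hf, ← integral_const_mul]
  refine norm_integral_le_of_norm_le (hf.norm.const_mul B) (ae_of_all _ fun y => ?_)
  rw [norm_mul]
  exact mul_le_mul_of_nonneg_right (hB y) (norm_nonneg _)

theorem FT_exp_phase_mul (a : ℝ → ℝ) (φ : ℝ → ℂ) (t x y : ℝ) :
    FT (fun ξ => Complex.exp (Complex.I * ((x : ℂ) * (ξ : ℂ) - (t : ℂ) * (a ξ : ℂ))) * φ ξ) y =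
      ∫ ξ : ℝ, Complex.exp (Complex.I * (((x - y : ℝ) : ℂ) * (ξ : ℂ) - (t : ℂ) * (a ξ : ℂ))) *
        φ ξ := by
  refine integral_congr_ae (ae_of_all _ fun ξ => ?_)
  simp only
  rw [← mul_assoc, ← Complex.exp_add]
  push_cast
  ring_nf

/-- Dispersive decay for the frequency-localized linear flow: a van der Corput bound
`|∫ e^{i(xξ - t a(ξ))} φ(ξ) dξ| ≤ C (1+M)(c₀|t|λ^γ)^{-1/2}` for a `C¹` cutoff `φ`
supported in `[λ/2, 2λ]` with `|φ| ≤ 1`, `∫|φ'| ≤ M`, under the convexity bound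
`a'' ≥ c₀λ^γ` there; consequently the frequency-localized free evolution satisfies
`‖e^{itA(D)}u_λ‖_{L^∞} ≤ C(1+M) c₀^{-1/2} λ^{-γ/2} |t|^{-1/2} ‖f‖_{L¹}`. -/
theorem stmt_12 :
    ∃ C : ℝ, 0 < C ∧
      ∀ (γ lam c₀ : ℝ), 1 ≤ lam → 0 < c₀ →
      ∀ a : ℝ → ℝ, ContDiff ℝ 2 a →
      (∀ ζ ∈ Icc (lam / 2) (2 * lam), c₀ * lam ^ γ ≤ deriv (deriv a) ζ) →
      ∀ φ : ℝ → ℂ, ContDiff ℝ 1 φ →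
        Function.support φ ⊆ Icc (lam / 2) (2 * lam) →
        (∀ ζ : ℝ, ‖φ ζ‖ ≤ 1) →
      ∀ M : ℝ, (∫ ζ : ℝ, ‖deriv φ ζ‖) ≤ M →
      (∀ t x : ℝ, t ≠ 0 →
          ‖∫ ξ : ℝ, Complex.exp (Complex.I * ((x : ℂ) * (ξ : ℂ) - (t : ℂ) * (a ξ : ℂ))) * φ ξ‖ ≤
            C * (1 + M) * (c₀ * |t| * lam ^ γ) ^ (-(1/2) : ℝ)) ∧
      ∀ f : ℝ → ℂ, Integrable f → ∀ t x : ℝ, t ≠ 0 →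
          ‖((2 * Real.pi : ℝ) : ℂ)⁻¹ *
              ∫ ξ : ℝ, Complex.exp (Complex.I * ((x : ℂ) * (ξ : ℂ) - (t : ℂ) * (a ξ : ℂ))) *
                φ ξ * FT f ξ‖ ≤
            C * (1 + M) * c₀ ^ (-(1/2) : ℝ) * lam ^ (-γ / 2) * |t| ^ (-(1/2) : ℝ) *
              ∫ x' : ℝ, ‖f x'‖ := by
  refine ⟨20, by norm_num, fun γ lam c₀ hlam hc₀ a ha ha'' φ hφ hsupp hφ1 M hM => ?_⟩
  have hlam0 : 0 < lam := by linarith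
  have hkernel : ∀ t x : ℝ, t ≠ 0 →
      ‖∫ ξ : ℝ, Complex.exp (Complex.I * ((x : ℂ) * (ξ : ℂ) - (t : ℂ) * (a ξ : ℂ))) * φ ξ‖ ≤
        20 * (1 + M) * (c₀ * |t| * lam ^ γ) ^ (-(1/2) : ℝ) := fun t x ht => by
    have := norm_integral_exp_phase_mul_le ha (by linarith) (by positivity)
      (fun ξ hξ => (ha'' ξ hξ).trans (le_abs_self _)) hφ hsupp hφ1 hM ht x
    rwa [mul_left_comm, ← mul_assoc] at this
  refine ⟨hkernel, fun f hf t x ht => ?_⟩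
  have hg : Integrable fun ξ : ℝ =>
      Complex.exp (Complex.I * ((x : ℂ) * (ξ : ℂ) - (t : ℂ) * (a ξ : ℂ))) * φ ξ :=
    (by fun_prop : Continuous _).integrable_of_hasCompactSupport
      (HasCompactSupport.of_support_subset_isCompact isCompact_Icc hsupp).mul_left
  have h2pi : ‖((2 * Real.pi : ℝ) : ℂ)⁻¹‖ ≤ 1 := by
    rw [norm_inv, Complex.norm_real, Real.norm_of_nonneg (by positivity)]
    exact inv_le_one_of_one_le₀ (by linarith [Real.pi_gt_three])
  calc _ ≤ 1 * (20 * (1 + M) * (c₀ * |t| * lam ^ γ) ^ (-(1/2) : ℝ) * ∫ y, ‖f y‖) := by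
        rw [norm_mul]
        gcongr
        exact norm_integral_mul_FT_le hg hf fun y => by
          rw [FT_exp_phase_mul]; exact hkernel t (x - y) ht
    _ = _ := by
        rw [Real.mul_rpow (by positivity) (by positivity), Real.mul_rpow hc₀.le (abs_nonneg t),
          ← Real.rpow_mul hlam0.le]
        ring_nf
end

section
/- Let g : ℝ⁴ → ℂ be a smooth function of the variables (η₁, η₂, η₃, η₄), and suppose that g(η₁, η₂, 0, η₄) = 0 whenever η₁ = 0 or η₂ = 0 (i.e. g vanishes on the set {η₃ = 0 and η₁η₂ = 0}). Then there exist smooth functions b, r : ℝ⁴ → ℂ such that g(η) = b(η) · η₁η₂ + r(η) · η₃ for all η ∈ ℝ⁴. -/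
/-!
Hadamard's lemma, iterated. For smooth `f` and `c`, the fundamental theorem of calculus along the
segment from `x - c x • v` to `x` gives `f x = f (x - c x • v) + c x • Q x`, where the quotient `Q`
is smooth (differentiate under the integral sign) and vanishes at every `x` such that `f` vanishes
on the whole line `x + ℝ v`. With `v` the `i`-th basis vector and `c η = η i` this divides by `η i`.

Dividing `g` by `η 2` leaves the remainder `g` with `η 2` set to `0`, which vanishes on
`{η 0 = 0}`; its quotient `q` by `η 0` vanishes on `{η 1 = 0}` because that set is a union of
lines in the `η 0`-direction on which the dividend vanishes, so `q` is in turn divisible by `η 1`.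
-/

open Set Metric
open scoped ContDiff

universe u

section ParametricIntegral

variable {E : Type u} [NormedAddCommGroup E] [NormedSpace ℝ E] [ProperSpace E]

theorem hasFDerivAt_intervalIntegral_of_contDiff {F : Type u} [NormedAddCommGroup F]
    [NormedSpace ℝ F] [CompleteSpace F] {G : E × ℝ → F} (hG : ContDiff ℝ 1 G) (a b : ℝ) (x₀ : E) :
    HasFDerivAt (fun x ↦ ∫ t in a..b, G (x, t))
      (∫ t in a..b, (fderiv ℝ G (x₀, t)).comp (ContinuousLinearMap.inl ℝ E ℝ)) x₀ := by
  have hG' : Continuous fun p ↦ (fderiv ℝ G p).comp (ContinuousLinearMap.inl ℝ E ℝ) :=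
    (hG.continuous_fderiv one_ne_zero).clm_comp continuous_const
  obtain ⟨C, hC⟩ := ((isCompact_closedBall x₀ 1).prod isCompact_uIcc).exists_bound_of_continuousOn
    (hG'.continuousOn (s := closedBall x₀ 1 ×ˢ uIcc a b))
  refine intervalIntegral.hasFDerivAt_integral_of_dominated_of_fderiv_le
    (bound := fun _ ↦ C) (ball_mem_nhds x₀ one_pos)
    (.of_forall fun x ↦ (hG.continuous.comp (.prodMk_right x)).aestronglyMeasurable)
    ((hG.continuous.comp (.prodMk_right x₀)).intervalIntegrable a b)
    (hG'.comp (.prodMk_right x₀)).aestronglyMeasurable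
    (.of_forall fun t ht x hx ↦ hC (x, t) ⟨ball_subset_closedBall hx, uIoc_subset_uIcc ht⟩)
    intervalIntegrable_const
    (.of_forall fun t _ x _ ↦ ?_)
  exact ((hG.differentiable one_ne_zero (x, t)).hasFDerivAt).comp x (hasFDerivAt_prodMk_left x t)

theorem contDiff_intervalIntegral_of_contDiff (n : ℕ) {F : Type u} [NormedAddCommGroup F]
    [NormedSpace ℝ F] [CompleteSpace F] {G : E × ℝ → F} (hG : ContDiff ℝ n G) (a b : ℝ) :
    ContDiff ℝ n fun x ↦ ∫ t in a..b, G (x, t) := by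
  induction n generalizing F with
  | zero =>
    exact contDiff_zero.2 <| intervalIntegral.continuous_parametric_intervalIntegral_of_continuous'
      (f := fun x t ↦ G (x, t)) (contDiff_zero.1 hG) a b
  | succ n ih =>
    have hG1 : ContDiff ℝ 1 G := hG.of_le (by simp)
    have hderiv := hasFDerivAt_intervalIntegral_of_contDiff hG1 a b
    rw [Nat.cast_succ]
    refine contDiff_succ_iff_fderiv.2 ⟨fun x ↦ (hderiv x).differentiableAt, by simp, ?_⟩
    rw [funext fun x ↦ (hderiv x).fderiv]
    exact ih <| (hG.fderiv_right le_rfl).clm_comp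
      (contDiff_const (c := ContinuousLinearMap.inl ℝ E ℝ))

end ParametricIntegral

section HadamardQuotient

variable {E F : Type u} [NormedAddCommGroup E] [NormedSpace ℝ E] [NormedAddCommGroup F]
  [NormedSpace ℝ F]

noncomputable def hadamardQuotient (f : E → F) (v : E) (c : E → ℝ) (x : E) : F :=
  ∫ t in (0 : ℝ)..1, fderiv ℝ f (x - c x • v + t • c x • v) v

theorem ContDiff.hadamardQuotient [ProperSpace E] [CompleteSpace F] {f : E → F}
    (hf : ContDiff ℝ ∞ f) (v : E) {c : E → ℝ} (hc : ContDiff ℝ ∞ c) :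
    ContDiff ℝ ∞ (hadamardQuotient f v c) := by
  have hpath : ContDiff ℝ ∞ fun p : E × ℝ ↦ p.1 - c p.1 • v + p.2 • c p.1 • v := by fun_prop
  have hG := ((hf.fderiv_right le_rfl).comp hpath).clm_apply (contDiff_const (c := v))
  exact contDiff_infty.2 fun n ↦
    contDiff_intervalIntegral_of_contDiff n (contDiff_infty.1 hG n) 0 1

theorem eq_add_smul_hadamardQuotient [CompleteSpace F] {f : E → F} (hf : ContDiff ℝ 1 f)
    (v : E) (c : E → ℝ) (x : E) : f x = f (x - c x • v) + c x • hadamardQuotient f v c x := by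
  have htaylor := map_add_eq_sum_add_integral_iteratedFDeriv (n := 0) (x := x - c x • v) (y := c x • v)
    fun t _ ↦ hf.contDiffAt
  simpa [hadamardQuotient, intervalIntegral.integral_smul] using htaylor

theorem hadamardQuotient_eq_zero {f : E → F} (hf : Differentiable ℝ f) {v x : E}
    (h : ∀ s : ℝ, f (x + s • v) = 0) (c : E → ℝ) : hadamardQuotient f v c x = 0 := by
  have hline : ∀ s : ℝ, fderiv ℝ f (x + s • v) v = 0 := fun s ↦ by
    rw [← (hf _).deriv_comp_add_smul, funext h, deriv_const]
  have hpoint : ∀ t : ℝ, x - c x • v + t • c x • v = x + ((t - 1) * c x) • v := fun t ↦ by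
    module
  simp [hadamardQuotient, hpoint, hline]

end HadamardQuotient

/-- Smooth division lemma in the diagonalizing coordinates: a smooth function `g(η₁,η₂,η₃,η₄)`
vanishing on the resonant set `{η₃ = 0 and η₁η₂ = 0}` can be written as
`g = b·η₁η₂ + r·η₃` with smooth coefficients `b, r`. -/
theorem stmt_17 (g : (Fin 4 → ℝ) → ℂ) (hg : ContDiff ℝ (⊤ : ℕ∞) g)
    (hvan : ∀ η : Fin 4 → ℝ, η 2 = 0 → (η 0 = 0 ∨ η 1 = 0) → g η = 0) :
    ∃ b r : (Fin 4 → ℝ) → ℂ,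
      ContDiff ℝ (⊤ : ℕ∞) b ∧ ContDiff ℝ (⊤ : ℕ∞) r ∧
      ∀ η : Fin 4 → ℝ, g η = b η * ((η 0 * η 1 : ℝ) : ℂ) + r η * ((η 2 : ℝ) : ℂ) := by
  set e : Fin 4 → Fin 4 → ℝ := fun i ↦ Pi.single i 1
  have hcoord (i : Fin 4) : ContDiff ℝ ∞ fun η : Fin 4 → ℝ ↦ η i := contDiff_apply ℝ ℝ i
  set h : (Fin 4 → ℝ) → ℂ := fun η ↦ g (η - η 2 • e 2)
  have hh : ContDiff ℝ ∞ h := hg.comp (contDiff_id.sub ((hcoord 2).smul contDiff_const))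
  set q := hadamardQuotient h (e 0) (· 0)
  have hq : ContDiff ℝ ∞ q := hh.hadamardQuotient _ (hcoord 0)
  refine ⟨hadamardQuotient q (e 1) (· 1), hadamardQuotient g (e 2) (· 2),
    hq.hadamardQuotient _ (hcoord 1), hg.hadamardQuotient _ (hcoord 2), fun η ↦ ?_⟩
  have hgr := eq_add_smul_hadamardQuotient (hg.of_le (by simp)) (e 2) (· 2) η
  have hhq := eq_add_smul_hadamardQuotient (hh.of_le (by simp)) (e 0) (· 0) η
  have hqb := eq_add_smul_hadamardQuotient (hq.of_le (by simp)) (e 1) (· 1) η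
  have hh0 : h (η - η 0 • e 0) = 0 := hvan _ (by simp [e]) (.inl (by simp [e]))
  have hq0 : q (η - η 1 • e 1) = 0 :=
    hadamardQuotient_eq_zero (hh.differentiable (by simp))
      (fun s ↦ hvan _ (by simp [e]) (.inr (by simp [e]))) _
  rw [hh0, zero_add] at hhq
  rw [hq0, zero_add] at hqb
  simp only [Complex.real_smul] at hgr hhq hqb
  push_cast
  linear_combination hgr + hhq + (η 0 : ℂ) * hqb
end

section
/- Let a : ℝ → ℝ be smooth and let f be a Schwartz function on ℝ whose Fourier transform f̂ has compact support. Define the free evolution u(t,x) := (2π)^{-1} ∫ e^{i(xξ - t a(ξ))} f̂(ξ) dξ, the momentum symbol p(ξ,η) := -(a(ξ)-a(η))/(ξ-η) for ξ ≠ η extended by p(ξ,ξ) := -a'(ξ), the momentum density P(t,x) := (2π)^{-2} ∬ e^{ix(ξ-η)} e^{-it(a(ξ)-a(η))} p(ξ,η) f̂(ξ) conj(f̂(η)) dξ dη, and the energy density E(t,x) := (2π)^{-2} ∬ e^{ix(ξ-η)} e^{-it(a(ξ)-a(η))} p(ξ,η)² f̂(ξ) conj(f̂(η)) dξ dη. Then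 P and E are real-valued, and for all (t,x) ∈ ℝ × ℝ the density–flux identities hold: ∂_t |u(t,x)|² = ∂_x P(t,x) and ∂_t P(t,x) = ∂_x E(t,x). -/
open MeasureTheory Set

/-- The momentum symbol `p(ξ,η) = -(a(ξ)-a(η))/(ξ-η)`, extended by `-a'(ξ)` on the diagonal. -/
noncomputable def psym (a : ℝ → ℝ) (ξ η : ℝ) : ℝ :=
  if ξ = η then -deriv a ξ else -((a ξ - a η) / (ξ - η))

/-- The free dispersive evolution `u(t,x) = (2π)⁻¹ ∫ e^{i(xξ - t a(ξ))} F(ξ) dξ`. -/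
noncomputable def uEvol (a : ℝ → ℝ) (F : ℝ → ℂ) (t x : ℝ) : ℂ :=
  ((2 * Real.pi : ℝ) : ℂ)⁻¹ *
    ∫ ξ : ℝ, Complex.exp (Complex.I * ((x : ℂ) * (ξ : ℂ) - (t : ℂ) * (a ξ : ℂ))) * F ξ

/-- The momentum density
`P(t,x) = (2π)^{-2} ∬ e^{ix(ξ-η)} e^{-it(a(ξ)-a(η))} p(ξ,η) f̂(ξ) conj(f̂(η)) dξ dη`. -/
noncomputable def Pdens (a : ℝ → ℝ) (F : ℝ → ℂ) (t x : ℝ) : ℂ :=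
  (((2 * Real.pi) ^ 2 : ℝ) : ℂ)⁻¹ *
    ∫ ξ : ℝ, ∫ η : ℝ,
      Complex.exp (Complex.I * (x : ℂ) * ((ξ : ℂ) - (η : ℂ))) *
        Complex.exp (-(Complex.I * (t : ℂ) * ((a ξ : ℝ) - (a η : ℝ) : ℝ))) *
        (psym a ξ η : ℂ) * F ξ * (starRingEnd ℂ) (F η)

/-- The energy density, with symbol `p(ξ,η)²`. -/
noncomputable def Edens (a : ℝ → ℝ) (F : ℝ → ℂ) (t x : ℝ) : ℂ :=
  (((2 * Real.pi) ^ 2 : ℝ) : ℂ)⁻¹ *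
    ∫ ξ : ℝ, ∫ η : ℝ,
      Complex.exp (Complex.I * (x : ℂ) * ((ξ : ℂ) - (η : ℂ))) *
        Complex.exp (-(Complex.I * (t : ℂ) * ((a ξ : ℝ) - (a η : ℝ) : ℝ))) *
        ((psym a ξ η) ^ 2 : ℝ) * F ξ * (starRingEnd ℂ) (F η)

/-! All three densities have the form
`(2π)⁻² ∬ e^{ix(ξ-η)} e^{-it(a(ξ)-a(η))} c(ξ,η) f̂(ξ) conj(f̂(η))` with symbols `c = 1, p, p²`.
Differentiating under the integral, `∂_t` multiplies the symbol by `-i(a(ξ)-a(η))` and `∂_x` by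
`i(ξ-η)`; since `(ξ-η) p(ξ,η) = -(a(ξ)-a(η))`, the time derivative of the density with symbol `c`
is the space derivative of the density with symbol `p c`. Domination is available because `f̂` is
continuous with compact support, on which `p` is bounded by the mean value theorem. A symmetric
symbol gives a real density, as conjugation swaps `ξ` and `η`. -/

open Complex ComplexConjugate

namespace LinearDispersive

lemma psym_comm (a : ℝ → ℝ) (ξ η : ℝ) : psym a ξ η = psym a η ξ := by
  rcases eq_or_ne ξ η with rfl | h
  · rfl
  · rw [psym, psym, if_neg h, if_neg h.symm, ← neg_sub (a ξ), ← neg_sub ξ, neg_div_neg_eq]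

lemma sub_mul_psym (a : ℝ → ℝ) (ξ η : ℝ) : (ξ - η) * psym a ξ η = -(a ξ - a η) := by
  rcases eq_or_ne ξ η with rfl | h
  · simp
  · rw [psym, if_neg h]
    field_simp [sub_ne_zero.mpr h]

def IsBoundedSymbolOn (s : Set ℝ) (c : ℝ → ℝ → ℝ) : Prop :=
  Measurable (Function.uncurry c) ∧ ∃ M, ∀ ξ ∈ s, ∀ η ∈ s, |c ξ η| ≤ M

namespace IsBoundedSymbolOn

variable {s : Set ℝ} {c c' : ℝ → ℝ → ℝ}

lemma mul (h : IsBoundedSymbolOn s c) (h' : IsBoundedSymbolOn s c') :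
    IsBoundedSymbolOn s (fun ξ η => c ξ η * c' ξ η) := by
  obtain ⟨hm, M, hM⟩ := h
  obtain ⟨hm', M', hM'⟩ := h'
  refine ⟨hm.mul hm', M * M', fun ξ hξ η hη => ?_⟩
  rw [abs_mul]
  exact mul_le_mul (hM ξ hξ η hη) (hM' ξ hξ η hη) (abs_nonneg _)
    ((abs_nonneg _).trans (hM ξ hξ η hη))

lemma of_continuous (hs : IsCompact s) (hc : Continuous (Function.uncurry c)) :
    IsBoundedSymbolOn s c := by
  obtain ⟨M, hM⟩ := (hs.prod hs).exists_bound_of_continuousOn hc.continuousOn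
  exact ⟨hc.measurable, M, fun ξ hξ η hη => hM (ξ, η) ⟨hξ, hη⟩⟩

end IsBoundedSymbolOn

lemma isBoundedSymbolOn_psym {s : Set ℝ} (hs : IsCompact s) {a : ℝ → ℝ} (ha : ContDiff ℝ 1 a) :
    IsBoundedSymbolOn s (psym a) := by
  have ha' : Continuous (deriv a) := ha.continuous_deriv le_rfl
  have ham : Measurable a := ha.continuous.measurable
  refine ⟨Measurable.ite (measurableSet_eq_fun measurable_fst measurable_snd)
    (ha'.measurable.comp measurable_fst).neg (by fun_prop), ?_⟩
  obtain ⟨m, hm⟩ := hs.bddBelow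
  obtain ⟨m', hm'⟩ := hs.bddAbove
  have hsI : s ⊆ Icc m m' := fun ξ hξ => ⟨hm hξ, hm' hξ⟩
  obtain ⟨C, hC⟩ := isCompact_Icc.exists_bound_of_continuousOn ha'.continuousOn
  refine ⟨C, fun ξ hξ η hη => ?_⟩
  rcases eq_or_ne ξ η with rfl | hne
  · simpa [psym] using hC ξ (hsI hξ)
  · have hlip : |a ξ - a η| ≤ C * |ξ - η| :=
      (convex_Icc m m').norm_image_sub_le_of_norm_deriv_le
        (fun y _ => ha.differentiable one_ne_zero y) hC (hsI hη) (hsI hξ)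
    rw [psym, if_neg hne, abs_neg, abs_div]
    exact div_le_of_le_mul₀ (abs_nonneg _) ((abs_nonneg _).trans (hC ξ (hsI hξ))) hlip

noncomputable def densityKernel (a : ℝ → ℝ) (F : ℝ → ℂ) (c : ℝ → ℝ → ℝ) (t x : ℝ)
    (q : ℝ × ℝ) : ℂ :=
  exp (I * (x : ℂ) * ((q.1 : ℂ) - (q.2 : ℂ))) *
    exp (-(I * (t : ℂ) * ((a q.1 - a q.2 : ℝ) : ℂ))) * (c q.1 q.2 : ℂ) * F q.1 * conj (F q.2)

noncomputable def bilinearDensity (a : ℝ → ℝ) (F : ℝ → ℂ) (c : ℝ → ℝ → ℝ) (t x : ℝ) : ℂ :=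
  (((2 * Real.pi) ^ 2 : ℝ) : ℂ)⁻¹ * ∫ q : ℝ × ℝ, densityKernel a F c t x q

section Density

variable {a : ℝ → ℝ} {F : ℝ → ℂ} {c : ℝ → ℝ → ℝ}

lemma norm_densityKernel (t x : ℝ) (q : ℝ × ℝ) :
    ‖densityKernel a F c t x q‖ = |c q.1 q.2| * (‖F q.1‖ * ‖F q.2‖) := by
  simp [densityKernel, norm_exp, mul_assoc]

lemma norm_densityKernel_le {M : ℝ} (hM : ∀ ξ ∈ tsupport F, ∀ η ∈ tsupport F, |c ξ η| ≤ M)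
    (t x : ℝ) (q : ℝ × ℝ) : ‖densityKernel a F c t x q‖ ≤ M * (‖F q.1‖ * ‖F q.2‖) := by
  rw [norm_densityKernel]
  by_cases h : q.1 ∈ tsupport F ∧ q.2 ∈ tsupport F
  · exact mul_le_mul_of_nonneg_right (hM _ h.1 _ h.2) (by positivity)
  · rcases not_and_or.mp h with h | h <;> simp [image_eq_zero_of_notMem_tsupport h]

lemma measurable_densityKernel (ha : Continuous a) (hF : Continuous F)
    (hc : Measurable (Function.uncurry c)) (t x : ℝ) :
    Measurable (densityKernel a F c t x) := by
  have hc' : Measurable fun q : ℝ × ℝ => c q.1 q.2 := hc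
  unfold densityKernel
  fun_prop

lemma integrable_norm_mul_norm (hFc : Continuous F) (hFs : HasCompactSupport F) (M : ℝ) :
    Integrable fun q : ℝ × ℝ => M * (‖F q.1‖ * ‖F q.2‖) := by
  have h : Integrable fun ξ => ‖F ξ‖ := hFc.norm.integrable_of_hasCompactSupport hFs.norm
  exact (h.mul_prod h).const_mul M

lemma integrable_densityKernel (ha : Continuous a) (hFc : Continuous F)
    (hFs : HasCompactSupport F) (hc : IsBoundedSymbolOn (tsupport F) c) (t x : ℝ) :
    Integrable (densityKernel a F c t x) := by
  obtain ⟨hm, M, hM⟩ := hc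
  exact (integrable_norm_mul_norm hFc hFs M).mono'
    (measurable_densityKernel ha hFc hm t x).aestronglyMeasurable
    (.of_forall (norm_densityKernel_le hM t x))

lemma hasDerivAt_densityKernel_time (t x : ℝ) (q : ℝ × ℝ) :
    HasDerivAt (fun s => densityKernel a F c s x q)
      (-I * densityKernel a F (fun ξ η => (a ξ - a η) * c ξ η) t x q) t := by
  have hφ : HasDerivAt (fun s : ℝ => -(I * (s : ℂ) * ((a q.1 - a q.2 : ℝ) : ℂ)))
      (-(I * 1 * ((a q.1 - a q.2 : ℝ) : ℂ))) t :=
    (((hasDerivAt_id t).ofReal_comp.const_mul I).mul_const _).neg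
  refine ((((hφ.cexp.const_mul (exp (I * (x : ℂ) * ((q.1 : ℂ) - (q.2 : ℂ))))).mul_const
    (c q.1 q.2 : ℂ)).mul_const (F q.1)).mul_const (conj (F q.2))).congr_deriv ?_
  simp only [densityKernel]
  push_cast
  ring

lemma hasDerivAt_densityKernel_space (t x : ℝ) (q : ℝ × ℝ) :
    HasDerivAt (fun y => densityKernel a F c t y q)
      (I * densityKernel a F (fun ξ η => (ξ - η) * c ξ η) t x q) x := by
  have hφ : HasDerivAt (fun y : ℝ => I * (y : ℂ) * ((q.1 : ℂ) - (q.2 : ℂ)))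
      (I * 1 * ((q.1 : ℂ) - (q.2 : ℂ))) x :=
    ((hasDerivAt_id x).ofReal_comp.const_mul I).mul_const _
  refine ((((hφ.cexp.mul_const (exp (-(I * (t : ℂ) * ((a q.1 - a q.2 : ℝ) : ℂ))))).mul_const
    (c q.1 q.2 : ℂ)).mul_const (F q.1)).mul_const (conj (F q.2))).congr_deriv ?_
  simp only [densityKernel]
  push_cast
  ring

lemma hasDerivAt_bilinearDensity_time (ha : Continuous a) (hFc : Continuous F)
    (hFs : HasCompactSupport F) (hc : IsBoundedSymbolOn (tsupport F) c) (t x : ℝ) :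
    HasDerivAt (fun s => bilinearDensity a F c s x)
      (-I * bilinearDensity a F (fun ξ η => (a ξ - a η) * c ξ η) t x) t := by
  obtain ⟨hm', M', hM'⟩ : IsBoundedSymbolOn (tsupport F) fun ξ η => (a ξ - a η) * c ξ η :=
    (IsBoundedSymbolOn.of_continuous hFs.isCompact (by fun_prop)).mul hc
  have h := hasDerivAt_integral_of_dominated_loc_of_deriv_le (x₀ := t) Filter.univ_mem
    (.of_forall fun s => (measurable_densityKernel ha hFc hc.1 s x).aestronglyMeasurable)
    (integrable_densityKernel ha hFc hFs hc t x)
    ((measurable_densityKernel ha hFc hm' t x).aestronglyMeasurable.const_mul (-I))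
    (.of_forall fun q s _ => by simpa using norm_densityKernel_le hM' s x q)
    (integrable_norm_mul_norm hFc hFs M')
    (.of_forall fun q s _ => hasDerivAt_densityKernel_time s x q)
  refine (h.2.const_mul _).congr_deriv ?_
  rw [bilinearDensity, integral_const_mul]
  ring

lemma hasDerivAt_bilinearDensity_space (ha : Continuous a) (hFc : Continuous F)
    (hFs : HasCompactSupport F) (hc : IsBoundedSymbolOn (tsupport F) c) (t x : ℝ) :
    HasDerivAt (fun y => bilinearDensity a F c t y)
      (I * bilinearDensity a F (fun ξ η => (ξ - η) * c ξ η) t x) x := by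
  obtain ⟨hm', M', hM'⟩ : IsBoundedSymbolOn (tsupport F) fun ξ η => (ξ - η) * c ξ η :=
    (IsBoundedSymbolOn.of_continuous hFs.isCompact (by fun_prop)).mul hc
  have h := hasDerivAt_integral_of_dominated_loc_of_deriv_le (x₀ := x) Filter.univ_mem
    (.of_forall fun y => (measurable_densityKernel ha hFc hc.1 t y).aestronglyMeasurable)
    (integrable_densityKernel ha hFc hFs hc t x)
    ((measurable_densityKernel ha hFc hm' t x).aestronglyMeasurable.const_mul I)
    (.of_forall fun q y _ => by simpa using norm_densityKernel_le hM' t y q)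
    (integrable_norm_mul_norm hFc hFs M')
    (.of_forall fun q y _ => hasDerivAt_densityKernel_space t y q)
  refine (h.2.const_mul _).congr_deriv ?_
  rw [bilinearDensity, integral_const_mul]
  ring

lemma bilinearDensity_neg (t x : ℝ) :
    bilinearDensity a F (fun ξ η => -c ξ η) t x = -bilinearDensity a F c t x := by
  simp only [bilinearDensity, densityKernel, ofReal_neg, mul_neg, neg_mul, integral_neg]

lemma deriv_bilinearDensity_time_eq (ha : ContDiff ℝ 1 a) (hFc : Continuous F)
    (hFs : HasCompactSupport F) (hc : IsBoundedSymbolOn (tsupport F) c) (t x : ℝ) :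
    deriv (fun s => bilinearDensity a F c s x) t =
      deriv (fun y => bilinearDensity a F (fun ξ η => psym a ξ η * c ξ η) t y) x := by
  have hpc := (isBoundedSymbolOn_psym hFs.isCompact ha).mul hc
  have hsymbol : (fun ξ η => (ξ - η) * (psym a ξ η * c ξ η)) =
      fun ξ η => -((a ξ - a η) * c ξ η) := by
    ext ξ η
    rw [← mul_assoc, sub_mul_psym, neg_mul]
  rw [(hasDerivAt_bilinearDensity_time ha.continuous hFc hFs hc t x).deriv,
    (hasDerivAt_bilinearDensity_space ha.continuous hFc hFs hpc t x).deriv, hsymbol,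
    bilinearDensity_neg]
  ring

lemma conj_densityKernel (hc : ∀ ξ η, c ξ η = c η ξ) (t x : ℝ) (q : ℝ × ℝ) :
    conj (densityKernel a F c t x q) = densityKernel a F c t x q.swap := by
  simp only [densityKernel, map_mul, ← exp_conj, conj_conj, conj_ofReal, map_neg, map_sub,
    conj_I, Prod.fst_swap, Prod.snd_swap, hc q.2 q.1, ofReal_sub]
  ring_nf

lemma im_bilinearDensity_eq_zero (hc : ∀ ξ η, c ξ η = c η ξ) (t x : ℝ) :
    (bilinearDensity a F c t x).im = 0 := by
  rw [← conj_eq_iff_im, bilinearDensity, map_mul, map_inv₀, conj_ofReal, ← integral_conj]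
  simp_rw [conj_densityKernel hc]
  rw [Measure.volume_eq_prod]
  congr 1
  exact integral_prod_swap _

lemma Pdens_eq_bilinearDensity {t x : ℝ} (hint : Integrable (densityKernel a F (psym a) t x)) :
    Pdens a F t x = bilinearDensity a F (psym a) t x := by
  rw [Measure.volume_eq_prod] at hint
  rw [bilinearDensity, Measure.volume_eq_prod, integral_prod _ hint]
  rfl

lemma Edens_eq_bilinearDensity {t x : ℝ}
    (hint : Integrable (densityKernel a F (fun ξ η => psym a ξ η * psym a ξ η) t x)) :
    Edens a F t x = bilinearDensity a F (fun ξ η => psym a ξ η * psym a ξ η) t x := by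
  rw [Measure.volume_eq_prod] at hint
  rw [bilinearDensity, Measure.volume_eq_prod, integral_prod _ hint]
  simp only [Edens, densityKernel, sq]

lemma normSq_uEvol_eq_bilinearDensity (t x : ℝ) :
    ((‖uEvol a F t x‖ ^ 2 : ℝ) : ℂ) = bilinearDensity a F (fun _ _ => 1) t x := by
  set g : ℝ → ℂ := fun ξ => exp (I * ((x : ℂ) * ξ - t * a ξ)) * F ξ
  have hkernel (q : ℝ × ℝ) : densityKernel a F (fun _ _ => 1) t x q = g q.1 * conj (g q.2) := by
    simp only [g, densityKernel, map_mul, ← exp_conj, map_sub, conj_I, conj_ofReal, ofReal_one]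
    have hexp : exp (I * x * (q.1 - q.2)) * exp (-(I * t * ((a q.1 - a q.2 : ℝ) : ℂ))) =
        exp (I * (x * q.1 - t * a q.1)) * exp (-I * (x * q.2 - t * a q.2)) := by
      rw [← exp_add, ← exp_add]
      congr 1
      push_cast
      ring
    linear_combination (F q.1 * conj (F q.2)) * hexp
  rw [bilinearDensity, Measure.volume_eq_prod]
  simp_rw [hkernel]
  rw [integral_prod_mul g (fun η => conj (g η)), integral_conj, ofReal_pow, ← mul_conj', uEvol,
    map_mul, map_inv₀, conj_ofReal]
  push_cast
  ring

end Density

lemma continuous_FT {f : ℝ → ℂ} (hf : Integrable f) : Continuous (FT f) :=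
  continuous_of_dominated (fun _ => (by fun_prop : Continuous _).aestronglyMeasurable.mul hf.1)
    (fun ξ => .of_forall fun x => by simp [norm_exp]) hf.norm (.of_forall fun x => by fun_prop)

end LinearDispersive

open LinearDispersive in
/-- Density–flux identities for the linear dispersive flow: for a Schwartz datum with
compactly supported Fourier transform, the momentum and energy densities `P`, `E` are real
valued, the mass density `|u|²` has flux `P`, and `P` has flux `E`:
`∂_t |u|² = ∂_x P` and `∂_t P = ∂_x E`. -/
theorem stmt_19 (a : ℝ → ℝ) (ha : ContDiff ℝ (⊤ : ℕ∞) a)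
    (f : SchwartzMap ℝ ℂ) (hf : HasCompactSupport (FT ⇑f)) :
    (∀ t x : ℝ, (Pdens a (FT ⇑f) t x).im = 0) ∧
    (∀ t x : ℝ, (Edens a (FT ⇑f) t x).im = 0) ∧
    (∀ t x : ℝ,
      deriv (fun τ : ℝ => ((‖uEvol a (FT ⇑f) τ x‖ ^ 2 : ℝ) : ℂ)) t =
        deriv (fun y : ℝ => Pdens a (FT ⇑f) t y) x) ∧
    (∀ t x : ℝ,
      deriv (fun τ : ℝ => Pdens a (FT ⇑f) τ x) t =
        deriv (fun y : ℝ => Edens a (FT ⇑f) t y) x) := by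
  set F := FT ⇑f
  have ha1 : ContDiff ℝ 1 a := ha.of_le (by exact_mod_cast le_top)
  have hFc : Continuous F := continuous_FT f.integrable
  have hp : IsBoundedSymbolOn (tsupport F) (psym a) := isBoundedSymbolOn_psym hf.isCompact ha1
  have hP (t x : ℝ) : Pdens a F t x = bilinearDensity a F (psym a) t x :=
    Pdens_eq_bilinearDensity (integrable_densityKernel ha1.continuous hFc hf hp t x)
  have hE (t x : ℝ) :
      Edens a F t x = bilinearDensity a F (fun ξ η => psym a ξ η * psym a ξ η) t x :=
    Edens_eq_bilinearDensity (integrable_densityKernel ha1.continuous hFc hf (hp.mul hp) t x)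
  refine ⟨fun t x => ?_, fun t x => ?_, fun t x => ?_, fun t x => ?_⟩
  · rw [hP]
    exact im_bilinearDensity_eq_zero (psym_comm a) t x
  · rw [hE]
    exact im_bilinearDensity_eq_zero (fun ξ η => by rw [psym_comm]) t x
  · simp_rw [normSq_uEvol_eq_bilinearDensity, hP]
    simpa only [mul_one] using deriv_bilinearDensity_time_eq ha1 hFc hf
      (c := fun _ _ => 1) (.of_continuous hf.isCompact continuous_const) t x
  · simp_rw [hP, hE]
    exact deriv_bilinearDensity_time_eq ha1 hFc hf hp t x
end
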